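/- arXiv:2302.04658 — 3 statements merged into one kernel-verified Lean document; each statement's English description precedes it below -/
import Mathlib

section
/- Let μ, ν be probability measures and γ ≥ 1. For any probability measure ν̃ with dν̃/dμ ≤ γ (μ-a.s.), the total variation distance TV(ν̃, ν) is at least E_γ(ν‖μ) := E_{X~μ}[(dν/dμ(X) − γ)_+]. -/
open MeasureTheory Set

/-- For probability measures `μ, ν` and `γ ≥ 1`, any probability measure
`ν'` with `dν'/dμ ≤ γ` (μ-a.s., and `ν' ≪ μ`) satisfies
`TV(ν', ν) ≥ E_γ(ν‖μ) = E_μ[(dν/dμ - γ)₊]`, with total variation expressed as the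
supremum of `|ν' A - ν A|` over measurable sets `A`. -/
theorem stmt_7 {α : Type*} [MeasurableSpace α]
    (μ ν ν' : Measure α) [IsProbabilityMeasure μ] [IsProbabilityMeasure ν]
    [IsProbabilityMeasure ν']
    (γ : ℝ) (hγ : 1 ≤ γ)
    (hac : ν' ≪ μ)
    (hbound : ∀ᵐ x ∂μ, ν'.rnDeriv μ x ≤ ENNReal.ofReal γ) :
    (∫⁻ x, (ν.rnDeriv μ x - ENNReal.ofReal γ) ∂μ) ≤
      ⨆ (A : Set α) (_ : MeasurableSet A), ((ν' A - ν A) ⊔ (ν A - ν' A)) := by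
  set f := ν.rnDeriv μ with hf
  set g := ENNReal.ofReal γ with hg
  set A : Set α := {x | g < f x} with hA_def
  have hA : MeasurableSet A := measurableSet_lt measurable_const (ν.measurable_rnDeriv μ)
  have h0 : ∫⁻ x in Aᶜ, (f x - g) ∂μ = 0 := by
    rw [setLIntegral_congr_fun hA.compl (fun x hx =>
      tsub_eq_zero_of_le (not_lt.mp hx))]
    simp
  have key : ∫⁻ x, (f x - g) ∂μ = ∫⁻ x in A, (f x - g) ∂μ := by
    rw [← lintegral_add_compl _ hA, h0, add_zero]
  have hgfin : ∫⁻ _ in A, g ∂μ ≠ ⊤ := by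
    rw [setLIntegral_const]
    exact ENNReal.mul_ne_top ENNReal.ofReal_ne_top (measure_ne_top μ A)
  have hsub : ∫⁻ x in A, (f x - g) ∂μ = (∫⁻ x in A, f x ∂μ) - g * μ A := by
    rw [lintegral_sub measurable_const hgfin
      (ae_restrict_of_forall_mem hA (fun x hx => (le_of_lt hx))), setLIntegral_const]
  have h1 : ∫⁻ x in A, f x ∂μ ≤ ν A := Measure.setLIntegral_rnDeriv_le A
  have h2 : ν' A ≤ g * μ A := by
    rw [← Measure.setLIntegral_rnDeriv hac A]
    calc ∫⁻ x in A, ν'.rnDeriv μ x ∂μ ≤ ∫⁻ _ in A, g ∂μ :=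
          lintegral_mono_ae (ae_restrict_of_ae hbound)
      _ = g * μ A := setLIntegral_const A g
  calc ∫⁻ x, (f x - g) ∂μ = (∫⁻ x in A, f x ∂μ) - g * μ A := by rw [key, hsub]
    _ ≤ ν A - ν' A := tsub_le_tsub h1 h2
    _ ≤ (ν' A - ν A) ⊔ (ν A - ν' A) := le_sup_right
    _ ≤ _ := le_iSup₂ (f := fun (A : Set α) (_ : MeasurableSet A) =>
        ((ν' A - ν A) ⊔ (ν A - ν' A))) A hA
end

section
/- Let f be convex on [0,∞) with f(1) = 0 and f'(1) = 0, growing superlinearly (f'(t) → ∞). Fix 0 < ε ≤ 1/4, n ≥ 1, and set μ = Bernoulli(ε/n), ν = Bernoulli(2ε). Then D_f(ν‖μ) ≤ 2ε·f'(2n) + f(1/2). -/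
open MeasureTheory Set

lemma withDensity_dirac' {α : Type*} [MeasurableSpace α] [MeasurableSingletonClass α]
    (a : α) (g : α → ENNReal) : (Measure.dirac a).withDensity g = g a • Measure.dirac a := by
  classical
  ext s hs
  rw [withDensity_apply _ hs, setLIntegral_dirac g s, Measure.smul_apply,
    Measure.dirac_apply' _ hs, smul_eq_mul]
  classical
  by_cases h : a ∈ s <;> simp [h]

/-- Let `f` be convex on `[0,∞)` with `f 1 = 0` and `f' 1 = 0`, where
`f'` is a nondecreasing subgradient of `f`, and `f'` unbounded (superlinear growth).
Fix `0 < ε ≤ 1/4`, `n ≥ 1`, `μ = Bernoulli(ε/n)`, `ν = Bernoulli(2ε)`.  Then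
`D_f(ν‖μ) ≤ 2ε·f'(2n) + f(1/2)`. -/
theorem stmt_10 (f f' : ℝ → ℝ) (hconv : ConvexOn ℝ (Set.Ici (0:ℝ)) f)
    (hf1 : f 1 = 0)
    (hsub : ∀ x ∈ Set.Ici (0:ℝ), ∀ y ∈ Set.Ici (0:ℝ), f x + f' x * (y - x) ≤ f y)
    (hf'mono : MonotoneOn f' (Set.Ici (0:ℝ))) (hf'1 : f' 1 = 0)
    (hsuper : ∀ C : ℝ, ∃ t : ℝ, 0 < t ∧ C ≤ f' t)
    (ε : ℝ) (hε0 : 0 < ε) (hε : ε ≤ 1 / 4) (n : ℕ) (hn : 1 ≤ n) :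
    (∫⁻ x,
        ENNReal.ofReal (f ((Measure.rnDeriv
            (ENNReal.ofReal (2 * ε) • Measure.dirac true
              + ENNReal.ofReal (1 - 2 * ε) • Measure.dirac false)
            (ENNReal.ofReal (ε / n) • Measure.dirac true
              + ENNReal.ofReal (1 - ε / n) • Measure.dirac false) x).toReal))
        ∂(ENNReal.ofReal (ε / n) • Measure.dirac true
            + ENNReal.ofReal (1 - ε / n) • Measure.dirac false))
      ≤ ENNReal.ofReal (2 * ε * f' (2 * n) + f (1 / 2)) := by
  have hn1 : (1:ℝ) ≤ n := by exact_mod_cast hn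
  have hnpos : (0:ℝ) < n := by linarith
  have hq0 : 0 < ε / n := div_pos hε0 hnpos
  have hεn : ε / n ≤ ε := by
    rw [div_le_iff₀ hnpos]; nlinarith
  have hq1 : ε / n ≤ 1 / 4 := hεn.trans hε
  have hq'pos : (0:ℝ) < 1 - ε / n := by linarith
  have hr : (1 - 2 * ε) / (1 - ε / n) ∈ Set.Icc (1/2 : ℝ) 1 := by
    constructor
    · rw [le_div_iff₀ hq'pos]; linarith
    · rw [div_le_one hq'pos]; linarith
  set r : ℝ := (1 - 2 * ε) / (1 - ε / n) with hrdef
  set μ : Measure Bool := ENNReal.ofReal (ε / n) • Measure.dirac true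
      + ENNReal.ofReal (1 - ε / n) • Measure.dirac false with hμ
  set ν : Measure Bool := ENNReal.ofReal (2 * ε) • Measure.dirac true
      + ENNReal.ofReal (1 - 2 * ε) • Measure.dirac false with hν
  have hμfin : IsFiniteMeasure μ := by
    constructor
    rw [hμ]
    simp only [Measure.coe_add, Pi.add_apply, Measure.smul_apply, smul_eq_mul,
      measure_univ, mul_one]
    exact ENNReal.add_lt_top.2 ⟨ENNReal.ofReal_lt_top, ENNReal.ofReal_lt_top⟩
  haveI := hμfin
  set g : Bool → ENNReal := fun b => if b then ENNReal.ofReal (2 * n) else ENNReal.ofReal r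
    with hg
  have hgmeas : Measurable g := measurable_of_countable g
  have hνwd : ν = μ.withDensity g := by
    rw [hμ, withDensity_add_measure, withDensity_smul_measure, withDensity_smul_measure,
      withDensity_dirac', withDensity_dirac', hν]
    have h1 : ENNReal.ofReal (ε / n) • (g true • Measure.dirac true)
        = ENNReal.ofReal (2 * ε) • Measure.dirac true := by
      rw [smul_smul]
      congr 1
      rw [hg]
      simp only [if_true]
      rw [← ENNReal.ofReal_mul hq0.le]
      congr 1
      field_simp
    have h2 : ENNReal.ofReal (1 - ε / n) • (g false • Measure.dirac false)
        = ENNReal.ofReal (1 - 2 * ε) • Measure.dirac false := by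
      rw [smul_smul]
      congr 1
      rw [hg]
      simp only [if_false, Bool.false_eq_true]
      rw [← ENNReal.ofReal_mul hq'pos.le, hrdef]
      congr 1
      rw [mul_comm, div_mul_cancel₀ _ (ne_of_gt hq'pos)]
    rw [h1, h2]
  have hrn : ν.rnDeriv μ =ᵐ[μ] g := by
    rw [hνwd]; exact Measure.rnDeriv_withDensity μ hgmeas
  have hcong : (∫⁻ x, ENNReal.ofReal (f ((ν.rnDeriv μ x).toReal)) ∂μ)
      = ∫⁻ x, ENNReal.ofReal (f ((g x).toReal)) ∂μ := by
    apply lintegral_congr_ae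
    filter_upwards [hrn] with x hx
    rw [hx]
  rw [hcong]
  rw [hμ, lintegral_add_measure, lintegral_smul_measure, lintegral_smul_measure,
    lintegral_dirac, lintegral_dirac]
  have hgt : (g true).toReal = 2 * n := by
    simp only [hg, if_true]
    exact ENNReal.toReal_ofReal (by positivity)
  have hgf : (g false).toReal = r := by
    simp only [hg, Bool.false_eq_true, if_false]
    exact ENNReal.toReal_ofReal (by linarith [hr.1])
  rw [hgt, hgf]
  -- real-side inequalities
  have h2n : (2 * (n:ℝ)) ∈ Set.Ici (0:ℝ) := Set.mem_Ici.mpr (by positivity)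
  have h1mem : (1:ℝ) ∈ Set.Ici (0:ℝ) := Set.mem_Ici.mpr (by norm_num)
  have hhalf : (1/2:ℝ) ∈ Set.Ici (0:ℝ) := Set.mem_Ici.mpr (by norm_num)
  have hf'nn : 0 ≤ f' (2 * n) := by
    rw [← hf'1]
    exact hf'mono h1mem h2n (by linarith)
  have hfbound : f (2 * n) ≤ (2 * n - 1) * f' (2 * n) := by
    have := hsub (2 * n) h2n 1 h1mem
    rw [hf1] at this
    nlinarith
  have key1 : (ε / n) * f (2 * n) ≤ 2 * ε * f' (2 * n) := by
    have h1 : (ε / n) * f (2 * n) ≤ (ε / n) * ((2 * n - 1) * f' (2 * n)) :=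
      mul_le_mul_of_nonneg_left hfbound hq0.le
    have h2 : (ε / n) * ((2 * n - 1) * f' (2 * n)) ≤ 2 * ε * f' (2 * n) := by
      rw [div_mul_eq_mul_div, div_le_iff₀ hnpos]
      nlinarith
    linarith
  have hfhalf : 0 ≤ f (1/2) := by
    have := hsub 1 h1mem (1/2) hhalf
    rw [hf1, hf'1] at this
    linarith
  have hfr : f r ≤ f (1/2) := by
    have hr1 := hr.1
    have hr2 := hr.2
    have hθ0 : (0:ℝ) ≤ 2 * (1 - r) := by linarith
    have hθ1 : (0:ℝ) ≤ 1 - 2 * (1 - r) := by linarith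
    have hcomb : (2 * (1 - r)) • (1/2:ℝ) + (1 - 2 * (1 - r)) • (1:ℝ) = r := by
      simp only [smul_eq_mul]; ring
    have h := hconv.2 hhalf h1mem hθ0 hθ1 (by ring)
    rw [hcomb, hf1] at h
    simp only [smul_eq_mul, mul_zero, add_zero, smul_zero] at h
    nlinarith [mul_nonneg hθ1 hfhalf]
  -- combine
  calc ENNReal.ofReal (ε / n) * ENNReal.ofReal (f (2 * n))
        + ENNReal.ofReal (1 - ε / n) * ENNReal.ofReal (f r)
      ≤ ENNReal.ofReal (2 * ε * f' (2 * n)) + ENNReal.ofReal (f (1/2)) := by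
        gcongr
        · rw [← ENNReal.ofReal_mul hq0.le]
          exact ENNReal.ofReal_le_ofReal key1
        · calc ENNReal.ofReal (1 - ε / n) * ENNReal.ofReal (f r)
              ≤ 1 * ENNReal.ofReal (f (1/2)) :=
                mul_le_mul' (ENNReal.ofReal_le_one.2 (by linarith))
                  (ENNReal.ofReal_le_ofReal hfr)
          _ = ENNReal.ofReal (f (1/2)) := one_mul _
    _ = ENNReal.ofReal (2 * ε * f' (2 * n) + f (1/2)) := by
        rw [ENNReal.ofReal_add (by positivity) hfhalf]
end

section
/- Let f be convex with f(1) = 0, f'(1) = 0, and suppose f' is bounded: f'(t) ≤ C < ∞ for all t. For any Δ with 0 < Δ ≤ C + f(0), there exist ε > 0 and probability measures μ, ν with D_f(ν‖μ) = Δ such that every probability measure ν̃ absolutely continuous with respect to μ satisfies TV(ν̃, ν) ≥ ε. -/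
open MeasureTheory Set

/-- Let `f` be convex with `f 1 = 0`, `f' 1 = 0`, `f'` a nondecreasing
subgradient of `f` bounded above by `C`.  For any `Δ` with `0 < Δ ≤ C + f 0`, there
exist `ε > 0` and probability measures `μ, ν` (on `ℝ`) with `D_f(ν‖μ) = Δ` — where
`D_f(ν‖μ)` includes the singular part with weight `f'(∞) = C`:
`D_f(ν‖μ) = ∫ f(dν/dμ) dμ + C·(ν.singularPart μ)(univ)` — such that every probability
measure `ν' ≪ μ` satisfies `TV(ν', ν) ≥ ε`. -/
theorem stmt_14 (f f' : ℝ → ℝ) (hconv : ConvexOn ℝ (Set.Ici (0:ℝ)) f)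
    (hf1 : f 1 = 0)
    (hsub : ∀ x ∈ Set.Ici (0:ℝ), ∀ y ∈ Set.Ici (0:ℝ), f x + f' x * (y - x) ≤ f y)
    (hf'mono : MonotoneOn f' (Set.Ici (0:ℝ))) (hf'1 : f' 1 = 0)
    (C : ℝ) (hC : ∀ t : ℝ, 0 ≤ t → f' t ≤ C)
    (Δ : ℝ) (hΔ0 : 0 < Δ) (hΔ : Δ ≤ C + f 0) :
    ∃ (ε : ℝ), 0 < ε ∧
      ∃ (μ ν : Measure ℝ), IsProbabilityMeasure μ ∧ IsProbabilityMeasure ν ∧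
        (∫⁻ x, ENNReal.ofReal (f ((ν.rnDeriv μ x).toReal)) ∂μ)
            + ENNReal.ofReal C * (ν.singularPart μ) Set.univ = ENNReal.ofReal Δ ∧
        ∀ ν' : Measure ℝ, IsProbabilityMeasure ν' → ν' ≪ μ →
          ENNReal.ofReal ε ≤
            ⨆ (A : Set ℝ) (_ : MeasurableSet A), ((ν' A - ν A) ⊔ (ν A - ν' A)) := by
  -- nonnegativity of f on [0, ∞)
  have hfnn : ∀ y : ℝ, 0 ≤ y → 0 ≤ f y := by
    intro y hy
    have := hsub 1 (by norm_num) y hy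
    rw [hf1, hf'1] at this; linarith
  have hCnn : 0 ≤ C := by have := hC 1 zero_le_one; rw [hf'1] at this; exact this
  -- f is Lipschitz on [0,1], hence continuous there
  have hlip : ∀ x ∈ Icc (0:ℝ) 1, ∀ y ∈ Icc (0:ℝ) 1, |f y - f x| ≤ (-f' 0) * |y - x| := by
    intro x hx y hy
    have hbd : ∀ t ∈ Icc (0:ℝ) 1, f' 0 ≤ f' t ∧ f' t ≤ 0 := by
      intro t ht
      constructor
      · exact hf'mono (le_refl (0:ℝ)) ht.1 ht.1
      · have := hf'mono ht.1 (by norm_num : (1:ℝ) ∈ Ici (0:ℝ)) ht.2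
        rw [hf'1] at this; exact this
    have h1 := hsub x hx.1 y hy.1
    have h2 := hsub y hy.1 x hx.1
    have hx' := hbd x hx
    have hy' := hbd y hy
    -- f' x * (y - x) ≤ f y - f x ≤ f' y * (y - x)
    rw [abs_le]
    rcases le_total x y with h | h
    · rw [abs_of_nonneg (by linarith : (0:ℝ) ≤ y - x)]
      constructor <;> nlinarith
    · rw [abs_of_nonpos (by linarith : y - x ≤ (0:ℝ))]
      constructor <;> nlinarith
  have hfcont : ContinuousOn f (Icc 0 1) := by
    have : LipschitzOnWith (Real.toNNReal (-f' 0)) f (Icc 0 1) := by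
      rw [lipschitzOnWith_iff_dist_le_mul]
      intro x hx y hy
      rw [Real.dist_eq, Real.dist_eq]
      calc |f x - f y| ≤ (-f' 0) * |x - y| := hlip y hy x hx
        _ ≤ (Real.toNNReal (-f' 0) : ℝ) * |x - y| := by
            apply mul_le_mul_of_nonneg_right (Real.le_coe_toNNReal _) (abs_nonneg _)
    exact this.continuousOn
  -- the function g ε = f (1 - ε) + C * ε
  set g : ℝ → ℝ := fun e => f (1 - e) + C * e with hg_def
  have hgcont : ContinuousOn g (Icc 0 1) := by
    apply ContinuousOn.add
    · apply hfcont.comp (Continuous.continuousOn (by continuity))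
      intro x hx
      simp only [mem_Icc] at *
      constructor <;> linarith [hx.1, hx.2]
    · exact (continuous_const.mul continuous_id).continuousOn
  have hivt := intermediate_value_Icc (zero_le_one) hgcont
  have hg0 : g 0 = 0 := by simp [hg_def, hf1]
  have hg1 : g 1 = f 0 + C := by simp [hg_def]
  have hΔmem : Δ ∈ Icc (g 0) (g 1) := by
    rw [hg0, hg1]; exact ⟨hΔ0.le, by linarith⟩
  obtain ⟨ε₀, hε₀mem, hgε₀⟩ := hivt hΔmem
  have hε₀pos : 0 < ε₀ := by
    rcases lt_or_eq_of_le hε₀mem.1 with h | h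
    · exact h
    · exfalso; rw [← h, hg0] at hgε₀; linarith
  have hε₀le : ε₀ ≤ 1 := hε₀mem.2
  refine ⟨ε₀, hε₀pos, ?_⟩
  -- the measures
  set μ : Measure ℝ := Measure.dirac 1 with hμ_def
  set ν : Measure ℝ := ENNReal.ofReal ε₀ • Measure.dirac 0
      + ENNReal.ofReal (1 - ε₀) • Measure.dirac 1 with hν_def
  have hμprob : IsProbabilityMeasure μ := by
    constructor; simp [hμ_def]
  have hνprob : IsProbabilityMeasure ν := by
    constructor
    simp only [hν_def, Measure.coe_add, Measure.coe_smul, Pi.add_apply, Pi.smul_apply,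
      measure_univ, smul_eq_mul, mul_one]
    rw [← ENNReal.ofReal_add hε₀pos.le (by linarith)]
    norm_num
  -- decomposition: ν = s + μ.withDensity const
  have hsing : Measure.MutuallySingular (ENNReal.ofReal ε₀ • Measure.dirac (0:ℝ)) μ := by
    refine ⟨{1}, measurableSet_singleton 1, ?_, ?_⟩
    · simp [Measure.dirac_apply' _ (measurableSet_singleton 1)]
    · simp [hμ_def]
  have hadd : ν = (ENNReal.ofReal ε₀ • Measure.dirac (0:ℝ))
      + μ.withDensity (fun _ => ENNReal.ofReal (1 - ε₀)) := by
    rw [withDensity_const]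
  have hrn : (fun _ : ℝ => ENNReal.ofReal (1 - ε₀)) =ᵐ[μ] ν.rnDeriv μ :=
    Measure.eq_rnDeriv measurable_const hsing hadd
  have hsp : ENNReal.ofReal ε₀ • Measure.dirac (0:ℝ) = ν.singularPart μ :=
    Measure.eq_singularPart measurable_const hsing hadd
  refine ⟨μ, ν, hμprob, hνprob, ?_, ?_⟩
  · -- divergence computation
    have hint : (∫⁻ x, ENNReal.ofReal (f ((ν.rnDeriv μ x).toReal)) ∂μ)
        = ENNReal.ofReal (f (1 - ε₀)) := by
      have : (∫⁻ x, ENNReal.ofReal (f ((ν.rnDeriv μ x).toReal)) ∂μ)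
          = ∫⁻ _, ENNReal.ofReal (f (1 - ε₀)) ∂μ := by
        apply lintegral_congr_ae
        filter_upwards [hrn] with x hx
        rw [← hx, ENNReal.toReal_ofReal (by linarith)]
      rw [this, lintegral_const, measure_univ, mul_one]
    have hspmass : (ν.singularPart μ) Set.univ = ENNReal.ofReal ε₀ := by
      rw [← hsp]; simp
    rw [hint, hspmass, ← ENNReal.ofReal_mul hCnn,
      ← ENNReal.ofReal_add (hfnn _ (by linarith)) (by positivity)]
    exact congrArg ENNReal.ofReal (by simpa [hg_def] using hgε₀)
  · -- total variation lower bound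
    intro ν' _ hac
    have hν'0 : ν' {0} = 0 := hac (by simp [hμ_def])
    have hν0 : ν {0} = ENNReal.ofReal ε₀ := by
      simp only [hν_def, Measure.coe_add, Measure.coe_smul, Pi.add_apply, Pi.smul_apply,
        smul_eq_mul]
      rw [Measure.dirac_apply' _ (measurableSet_singleton 0),
        Measure.dirac_apply' _ (measurableSet_singleton 0)]
      simp
    refine le_trans ?_ (le_iSup₂ (f := fun (A : Set ℝ) (_ : MeasurableSet A) =>
      (ν' A - ν A) ⊔ (ν A - ν' A)) {0} (measurableSet_singleton 0))
    rw [hν'0, hν0]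
    simp
end
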